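/- arXiv:1910.11055 — 4 statements merged into one kernel-verified Lean document; each statement's English description precedes it below -/
import Mathlib

section
/- Let E be a vector lattice with the principal projection property, F a vector lattice, Φ : 𝔅(E) → 𝔅(F) a Boolean homomorphism, and T : E → F atomic subordinate to Φ. Then T is disjointness preserving: for all x, y ∈ E, x ⊥ y implies T x ⊥ T y. -/
/-! The principal projection `π` onto the band generated by `x` satisfies `π x = x` and
`π y = 0` whenever `y ⊥ x`: in either case the element in question is disjoint from two
elements whose difference it is, hence from itself. Atomicity carries these to
`Φ π (T x) = T x` and `Φ π (T y) = 0`, and two elements one of which is fixed and the other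
annihilated by an order projection are disjoint. -/

namespace VL

/-- Two elements of a vector lattice are disjoint if `|x| ⊓ |y| = 0`. -/
def VDisjoint {G : Type*} [Lattice G] [AddCommGroup G] (x y : G) : Prop :=
  |x| ⊓ |y| = 0

/-- `y` is a fragment of `x` if `y ⊥ (x - y)`. -/
def Fragment {G : Type*} [Lattice G] [AddCommGroup G] (y x : G) : Prop :=
  VDisjoint y (x - y)

/-- An order projection: a linear idempotent `π` with `0 ≤ π x ≤ x` for all `x ≥ 0`. -/
def IsOrderProjection {G : Type*} [Lattice G] [AddCommGroup G] [Module ℝ G]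
    (π : G →ₗ[ℝ] G) : Prop :=
  (∀ x, π (π x) = π x) ∧ ∀ x : G, 0 ≤ x → 0 ≤ π x ∧ π x ≤ x

/-- A map between the order projections of `E` and of `F` is a Boolean homomorphism if it
maps order projections to order projections and preserves the Boolean operations
`π ∧ ρ = π ∘ ρ`, `π ∨ ρ = π + ρ - π ∘ ρ` and `compl π = Id - π`. -/
def IsBooleanHom {E F : Type*} [Lattice E] [AddCommGroup E] [Module ℝ E]
    [Lattice F] [AddCommGroup F] [Module ℝ F]
    (Φ : (E →ₗ[ℝ] E) → (F →ₗ[ℝ] F)) : Prop :=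
  (∀ π, IsOrderProjection π → IsOrderProjection (Φ π)) ∧
  (∀ π ρ, IsOrderProjection π → IsOrderProjection ρ →
    Φ (π ∘ₗ ρ) = Φ π ∘ₗ Φ ρ) ∧
  (∀ π ρ, IsOrderProjection π → IsOrderProjection ρ →
    Φ (π + ρ - π ∘ₗ ρ) = Φ π + Φ ρ - Φ π ∘ₗ Φ ρ) ∧
  (∀ π, IsOrderProjection π → Φ (LinearMap.id - π) = LinearMap.id - Φ π)

/-- `T` is atomic subordinate to `Φ` if `T (π x) = Φ(π) (T x)` for every order projection. -/
def IsAtomic {E F : Type*} [Lattice E] [AddCommGroup E] [Module ℝ E]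
    [Lattice F] [AddCommGroup F] [Module ℝ F]
    (Φ : (E →ₗ[ℝ] E) → (F →ₗ[ℝ] F)) (T : E → F) : Prop :=
  ∀ π : E →ₗ[ℝ] E, IsOrderProjection π → ∀ x : E, T (π x) = Φ π (T x)

/-- The principal projection property: for every `x` there is an order projection `π_x`
(the projection onto the band generated by `x`) such that `z - π_x z ⊥ x` for all `z`,
and `π_x z ⊥ w` whenever `w ⊥ x`. -/
def HasPPP (E : Type*) [Lattice E] [AddCommGroup E] [Module ℝ E] : Prop :=
  ∀ x : E, ∃ π : E →ₗ[ℝ] E, IsOrderProjection π ∧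
    (∀ z : E, VDisjoint (z - π z) x) ∧
    (∀ z w : E, VDisjoint w x → VDisjoint (π z) w)

/-- Dedekind completeness: every nonempty set bounded above has a supremum. -/
def DedekindComplete (F : Type*) [Lattice F] : Prop :=
  ∀ S : Set F, S.Nonempty → BddAbove S → ∃ b, IsLUB S b

section Disjointness

variable {G : Type*} [Lattice G] [AddCommGroup G]

theorem VDisjoint.symm {a b : G} (h : VDisjoint a b) : VDisjoint b a := by
  rwa [VDisjoint, inf_comm]

variable [AddLeftMono G]

theorem inf_add_le_inf_add_inf {a b c : G} (ha : 0 ≤ a) (hb : 0 ≤ b) (hc : 0 ≤ c) :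
    a ⊓ (b + c) ≤ a ⊓ b + a ⊓ c := by
  rw [add_inf]
  refine le_inf (inf_le_left.trans (le_add_of_nonneg_left (le_inf ha hb))) ?_
  rw [inf_add]
  exact le_inf (inf_le_left.trans (le_add_of_nonneg_right hc)) inf_le_right

theorem abs_eq_zero_iff {a : G} : |a| = 0 ↔ a = 0 := by
  refine ⟨fun h => le_antisymm ?_ ?_, fun h => by rw [h, abs_zero]⟩
  · exact h ▸ le_abs_self a
  · exact neg_nonpos.1 (h ▸ neg_le_abs a)

theorem eq_zero_of_vdisjoint_self {a : G} (h : VDisjoint a a) : a = 0 := by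
  rwa [VDisjoint, inf_idem, abs_eq_zero_iff] at h

theorem abs_sub_le_abs_add_abs (a b : G) : |a - b| ≤ |a| + |b| := by
  simpa only [sub_eq_add_neg, abs_neg] using abs_add_le a (-b)

theorem VDisjoint.sub_right {a b c : G} (hb : VDisjoint a b) (hc : VDisjoint a c) :
    VDisjoint a (b - c) := by
  refine le_antisymm ?_ (le_inf (abs_nonneg a) (abs_nonneg _))
  calc |a| ⊓ |b - c| ≤ |a| ⊓ (|b| + |c|) := inf_le_inf_left _ (abs_sub_le_abs_add_abs b c)
    _ ≤ |a| ⊓ |b| + |a| ⊓ |c| :=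
      inf_add_le_inf_add_inf (abs_nonneg a) (abs_nonneg b) (abs_nonneg c)
    _ = 0 := by rw [hb, hc, add_zero]

end Disjointness

section Projections

variable {G : Type*} [Lattice G] [AddCommGroup G] [Module ℝ G]

def IsPrincipalProjection (π : G →ₗ[ℝ] G) (x : G) : Prop :=
  (∀ z, VDisjoint (z - π z) x) ∧ ∀ z w, VDisjoint w x → VDisjoint (π z) w

variable [AddLeftMono G]

namespace IsPrincipalProjection

variable {π : G →ₗ[ℝ] G} {x : G}

theorem map_self (h : IsPrincipalProjection π x) : π x = x := by
  have hx : VDisjoint (x - π x) x := h.1 x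
  have hπx : VDisjoint (x - π x) (π x) := (h.2 x _ hx).symm
  exact (sub_eq_zero.1 (eq_zero_of_vdisjoint_self (hx.sub_right hπx))).symm

theorem map_eq_zero_of_vdisjoint (h : IsPrincipalProjection π x) {y : G} (hy : VDisjoint y x) :
    π y = 0 := by
  have hπy : VDisjoint (π y) y := h.2 y y hy
  have hπy' : VDisjoint (π y) (y - π y) := h.2 y _ (h.1 y)
  exact eq_zero_of_vdisjoint_self (by simpa only [sub_sub_cancel] using hπy.sub_right hπy')

end IsPrincipalProjection

namespace IsOrderProjection

variable {ρ : G →ₗ[ℝ] G}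

theorem monotone (hρ : IsOrderProjection ρ) : Monotone ρ := fun u v h => by
  simpa only [map_sub, sub_nonneg] using (hρ.2 (v - u) (sub_nonneg.2 h)).1

theorem id_sub (hρ : IsOrderProjection ρ) : IsOrderProjection (LinearMap.id - ρ) :=
  ⟨fun z => by simp [hρ.1],
    fun z hz => ⟨sub_nonneg.2 (hρ.2 z hz).2, sub_le_self z (hρ.2 z hz).1⟩⟩

theorem map_abs_eq_zero (hρ : IsOrderProjection ρ) {b : G} (hb : ρ b = 0) : ρ |b| = 0 := by
  -- `id - ρ` fixes `±b`, so by monotonicity it maps `|b|` above `|b|`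
  have hσ := hρ.id_sub.monotone
  have h : |b| ≤ |b| - ρ |b| := abs_le'.2
    ⟨by simpa [hb] using hσ (le_abs_self b), by simpa [hb] using hσ (neg_le_abs b)⟩
  exact le_antisymm ((le_sub_self_iff _).1 h) (hρ.2 _ (abs_nonneg b)).1

theorem map_eq_zero_of_le_abs (hρ : IsOrderProjection ρ) {b c : G} (hb : ρ b = 0)
    (hc₀ : 0 ≤ c) (hc : c ≤ |b|) : ρ c = 0 :=
  le_antisymm ((hρ.monotone hc).trans_eq (hρ.map_abs_eq_zero hb)) (hρ.2 c hc₀).1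

theorem vdisjoint_of_map_eq_self_of_map_eq_zero (hρ : IsOrderProjection ρ) {a b : G}
    (ha : ρ a = a) (hb : ρ b = 0) : VDisjoint a b := by
  have hc₀ : 0 ≤ |a| ⊓ |b| := le_inf (abs_nonneg a) (abs_nonneg b)
  have hρc : ρ (|a| ⊓ |b|) = 0 := hρ.map_eq_zero_of_le_abs hb hc₀ inf_le_right
  have hσc : (LinearMap.id - ρ : G →ₗ[ℝ] G) (|a| ⊓ |b|) = 0 :=
    hρ.id_sub.map_eq_zero_of_le_abs (by simp [ha]) hc₀ inf_le_left
  show |a| ⊓ |b| = 0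
  simpa [hρc] using hσc

end IsOrderProjection

end Projections

namespace IsAtomic

variable {E F : Type*} [Lattice E] [AddCommGroup E] [Module ℝ E]
  [Lattice F] [AddCommGroup F] [Module ℝ F]
  {Φ : (E →ₗ[ℝ] E) → (F →ₗ[ℝ] F)} {T : E → F} {π : E →ₗ[ℝ] E}

theorem map_apply_eq_self (hT : IsAtomic Φ T) (hπ : IsOrderProjection π) {x : E}
    (hx : π x = x) : Φ π (T x) = T x := by
  rw [← hT π hπ x, hx]

theorem map_apply_eq_zero [AddLeftMono E] (hT : IsAtomic Φ T) (hΦ : IsBooleanHom Φ)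
    (hπ : IsOrderProjection π) {y : E} (hy : π y = 0) : Φ π (T y) = 0 := by
  have h := hT _ hπ.id_sub y
  rw [hΦ.2.2.2 π hπ] at h
  have h' : T y = T y - Φ π (T y) := by simpa [hy] using h
  exact sub_eq_self.1 h'.symm

end IsAtomic

variable {E F : Type*}
  [Lattice E] [AddCommGroup E] [Module ℝ E]
  [CovariantClass E E (· + ·) (· ≤ ·)] [PosSMulMono ℝ E]
  [Lattice F] [AddCommGroup F] [Module ℝ F]
  [CovariantClass F F (· + ·) (· ≤ ·)] [PosSMulMono ℝ F]

/-- an atomic operator on a vector lattice with the principal projection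
property is disjointness preserving. -/
theorem atomic_disjointness_preserving
    (hE : HasPPP E) (Φ : (E →ₗ[ℝ] E) → (F →ₗ[ℝ] F)) (hΦ : IsBooleanHom Φ)
    (T : E → F) (hT : IsAtomic Φ T) :
    ∀ x y : E, VDisjoint x y → VDisjoint (T x) (T y) := by
  intro x y hxy
  obtain ⟨π, hπ, hπx⟩ : ∃ π, IsOrderProjection π ∧ IsPrincipalProjection π x := hE x
  exact (hΦ.1 π hπ).vdisjoint_of_map_eq_self_of_map_eq_zero
    (hT.map_apply_eq_self hπ hπx.map_self)
    (hT.map_apply_eq_zero hΦ hπ (hπx.map_eq_zero_of_vdisjoint hxy.symm))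

end VL
end

section
/- Let E be a vector lattice with the principal projection property, F a Dedekind complete vector lattice, Φ : 𝔅(E) → 𝔅(F) a Boolean homomorphism, T : E → F atomic subordinate to Φ, and let S : E → F be an orthogonally additive operator with 0 ≤ S x ≤ T x for all x ∈ E. Then S is atomic subordinate to Φ. (In other words, the atomic operators subordinate to Φ form an order ideal in the regular orthogonally additive operators.) -/
/-! Fix an order projection `π` and split `x = π x + (x - π x)` into disjoint parts, on which `S`
is additive. Since `T` is atomic, `Φ π` fixes `T (π x)` and kills `T (x - π x)`; an order
projection that fixes (kills) a positive element fixes (kills) everything between `0` and it, so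
`Φ π (S x) = S (π x)`. -/

namespace VL

variable {E F : Type*}
  [Lattice E] [AddCommGroup E] [Module ℝ E]
  [CovariantClass E E (· + ·) (· ≤ ·)] [PosSMulMono ℝ E]
  [Lattice F] [AddCommGroup F] [Module ℝ F]
  [CovariantClass F F (· + ·) (· ≤ ·)] [PosSMulMono ℝ F]

section OrderProjection

variable {G : Type*} [Lattice G] [AddCommGroup G] [Module ℝ G]
  [CovariantClass G G (· + ·) (· ≤ ·)] {π : G →ₗ[ℝ] G}

namespace IsOrderProjection

lemma monotone_s6 (hπ : IsOrderProjection π) : Monotone π := fun a b hab =>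
  sub_nonneg.mp (map_sub π b a ▸ (hπ.2 _ (sub_nonneg.mpr hab)).1)

lemma compl (hπ : IsOrderProjection π) : IsOrderProjection (LinearMap.id - π) := by
  refine ⟨fun x => ?_, fun x hx => ?_⟩
  · simp only [LinearMap.sub_apply, LinearMap.id_apply, map_sub, hπ.1, sub_self, sub_zero]
  · simp only [LinearMap.sub_apply, LinearMap.id_apply]
    exact ⟨sub_nonneg.mpr (hπ.2 x hx).2, sub_le_self x (hπ.2 x hx).1⟩

lemma sub_apply_mono (hπ : IsOrderProjection π) {a b : G} (hab : a ≤ b) :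
    a - π a ≤ b - π b :=
  hπ.compl.monotone_s6 hab

lemma abs_apply_le (hπ : IsOrderProjection π) (x : G) : |π x| ≤ π |x| :=
  abs_le'.mpr ⟨hπ.monotone_s6 (le_abs_self x), map_neg π x ▸ hπ.monotone_s6 (neg_le_abs x)⟩

lemma abs_sub_apply_le (hπ : IsOrderProjection π) (x : G) : |x - π x| ≤ |x| - π |x| :=
  hπ.compl.abs_apply_le x

lemma apply_inf_sub_apply_eq_zero (hπ : IsOrderProjection π) {a : G} (ha : 0 ≤ a) :
    π a ⊓ (a - π a) = 0 := by
  set c := π a ⊓ (a - π a)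
  have hc : 0 ≤ c := le_inf (hπ.2 a ha).1 (sub_nonneg.mpr (hπ.2 a ha).2)
  have hπc : π c ≤ 0 := by
    simpa [hπ.1] using hπ.monotone_s6 (inf_le_right : c ≤ a - π a)
  have hπc' : c - π c ≤ 0 := by
    simpa [hπ.1] using hπ.sub_apply_mono (inf_le_left : c ≤ π a)
  exact le_antisymm (by simpa using add_nonpos hπc hπc') hc

lemma vDisjoint_apply_sub_apply (hπ : IsOrderProjection π) (x : G) :
    VDisjoint (π x) (x - π x) :=
  le_antisymm
    ((inf_le_inf (hπ.abs_apply_le x) (hπ.abs_sub_apply_le x)).trans_eq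
      (hπ.apply_inf_sub_apply_eq_zero (abs_nonneg x)))
    (le_inf (abs_nonneg _) (abs_nonneg _))

lemma apply_eq_zero_of_le (hπ : IsOrderProjection π) {u v : G} (hu : 0 ≤ u) (huv : u ≤ v)
    (hv : π v = 0) : π u = 0 :=
  le_antisymm (hv ▸ hπ.monotone_s6 huv) (hπ.2 u hu).1

lemma apply_eq_self_of_le (hπ : IsOrderProjection π) {u v : G} (hu : 0 ≤ u) (huv : u ≤ v)
    (hv : π v = v) : π u = u := by
  have h : u - π u = 0 := by simpa using hπ.compl.apply_eq_zero_of_le hu huv (by simp [hv])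
  exact (sub_eq_zero.mp h).symm

end IsOrderProjection

end OrderProjection

section Atomic

variable {X Y : Type*} [Lattice X] [AddCommGroup X] [Module ℝ X]
  [Lattice Y] [AddCommGroup Y] [Module ℝ Y]
  {Φ : (X →ₗ[ℝ] X) → (Y →ₗ[ℝ] Y)} {T : X → Y} {π : X →ₗ[ℝ] X}

lemma IsAtomic.map_apply_eq_self_s6 (hT : IsAtomic Φ T) (hπ : IsOrderProjection π) {y : X}
    (hy : π y = y) : Φ π (T y) = T y := by
  rw [← hT π hπ y, hy]

lemma IsAtomic.map_apply_eq_zero_s6 [CovariantClass X X (· + ·) (· ≤ ·)] (hT : IsAtomic Φ T)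
    (hΦ : IsBooleanHom Φ) (hπ : IsOrderProjection π) {y : X} (hy : π y = 0) :
    Φ π (T y) = 0 := by
  simpa [hΦ.2.2.2 π hπ] using hT.map_apply_eq_self_s6 (y := y) hπ.compl (by simp [hy])

end Atomic

theorem atomic_ideal_general
    (Φ : (E →ₗ[ℝ] E) → (F →ₗ[ℝ] F)) (hΦ : IsBooleanHom Φ)
    (T : E → F) (hT : IsAtomic Φ T)
    (S : E → F) (hSoa : ∀ x y : E, VDisjoint x y → S (x + y) = S x + S y)
    (hST : ∀ x : E, 0 ≤ S x ∧ S x ≤ T x) :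
    IsAtomic Φ S := by
  intro π hπ x
  have hΦπ := hΦ.1 π hπ
  have hsplit : S x = S (π x) + S (x - π x) := by
    simpa using hSoa _ _ (hπ.vDisjoint_apply_sub_apply x)
  have hfix : Φ π (S (π x)) = S (π x) :=
    hΦπ.apply_eq_self_of_le (hST _).1 (hST _).2 (hT.map_apply_eq_self_s6 hπ (hπ.1 x))
  have hkill : Φ π (S (x - π x)) = 0 :=
    hΦπ.apply_eq_zero_of_le (hST _).1 (hST _).2
      (hT.map_apply_eq_zero_s6 hΦ hπ (by simp [hπ.1]))
  rw [hsplit, map_add, hfix, hkill, add_zero]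

/-- an orthogonally additive operator dominated by an atomic operator
(between `0` and `T`) is itself atomic subordinate to the same Boolean homomorphism. -/
theorem atomic_ideal
    (hE : HasPPP E) (hF : DedekindComplete F)
    (Φ : (E →ₗ[ℝ] E) → (F →ₗ[ℝ] F)) (hΦ : IsBooleanHom Φ)
    (T : E → F) (hT : IsAtomic Φ T)
    (S : E → F) (hSoa : ∀ x y : E, VDisjoint x y → S (x + y) = S x + S y)
    (hST : ∀ x : E, 0 ≤ S x ∧ S x ≤ T x) :
    IsAtomic Φ S :=
  atomic_ideal_general Φ hΦ T hT S hSoa hST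

end VL
end

section
/- Let E and F be vector lattices, Φ : 𝔅(E) → 𝔅(F) a Boolean homomorphism, (T_λ)_{λ∈Λ} a net of maps E → F each of which is atomic subordinate to Φ, and T : E → F a map such that for every x ∈ E the net (T_λ x) order converges to T x, i.e. there is a net (u_λ)_{λ∈Λ} in F with u_λ ↓ 0 and |T_λ x − T x| ≤ u_λ for all λ beyond some index λ₀. Then T is atomic subordinate to Φ. (Together with the ideal property, this shows that the atomic operators subordinate to Φ form a band in the regular orthogonally additive operators.) -/
/-!
An order projection is a contraction for `|·|`, so for `λ` beyond both indices
`|T (π x) - Φ π (T x)| ≤ |T (π x) - T_λ (π x)| + |Φ π (T_λ x - T x)| ≤ u_λ + v_λ`,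
where `u` and `v` witness the order convergence at `π x` and at `x`. Since `u_λ + v_λ ↓ 0`
in a directed index set, the left side is `0`.
-/

namespace VL

section OrderNull

variable {Λ : Type*} [Preorder Λ] [IsDirected Λ (· ≤ ·)]

theorem _root_.Antitone.le_of_eventually_le {α : Type*} [Preorder α] {u : Λ → α} {b a : α}
    (hu : Antitone u) (hb : IsGLB (Set.range u) b) {l₀ : Λ} (ha : ∀ l, l₀ ≤ l → a ≤ u l) :
    a ≤ b := by
  refine hb.2 ?_
  rintro _ ⟨l, rfl⟩
  obtain ⟨m, hl₀m, hlm⟩ := directed_of (· ≤ ·) l₀ l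
  exact (ha m hl₀m).trans (hu hlm)

theorem _root_.Antitone.isGLB_range_add {α : Type*} [AddCommGroup α] [PartialOrder α]
    [AddLeftMono α] {u v : Λ → α} (hu : Antitone u) (hu0 : IsGLB (Set.range u) 0)
    (hv : Antitone v) (hv0 : IsGLB (Set.range v) 0) :
    IsGLB (Set.range fun l => u l + v l) 0 := by
  refine ⟨?_, fun b hb => ?_⟩
  · rintro _ ⟨l, rfl⟩
    exact add_nonneg (hu0.1 ⟨l, rfl⟩) (hv0.1 ⟨l, rfl⟩)
  · -- `b - v m ≤ u l`, through an index above both `l` and `m`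
    have hbv : ∀ m, b ≤ v m := fun m => by
      refine sub_nonpos.1 (hu0.2 ?_)
      rintro _ ⟨l, rfl⟩
      obtain ⟨k, hlk, hmk⟩ := directed_of (· ≤ ·) l m
      exact sub_le_iff_le_add.2 ((hb ⟨k, rfl⟩).trans (add_le_add (hu hlk) (hv hmk)))
    exact hv0.2 (Set.forall_mem_range.2 hbv)

end OrderNull

theorem IsOrderProjection.abs_apply_le_s7 {G : Type*} [Lattice G] [AddCommGroup G] [Module ℝ G]
    [AddLeftMono G] {π : G →ₗ[ℝ] G} (hπ : IsOrderProjection π) (z : G) : |π z| ≤ |z| := by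
  obtain ⟨hpos_nonneg, hpos_le⟩ := hπ.2 z⁺ (posPart_nonneg z)
  obtain ⟨hneg_nonneg, hneg_le⟩ := hπ.2 z⁻ (negPart_nonneg z)
  calc |π z| = |π z⁺ + -π z⁻| := by
        rw [← map_neg, ← map_add, ← sub_eq_add_neg, posPart_sub_negPart]
    _ ≤ |π z⁺| + |-π z⁻| := abs_add_le _ _
    _ = π z⁺ + π z⁻ := by rw [abs_neg, abs_of_nonneg hpos_nonneg, abs_of_nonneg hneg_nonneg]
    _ ≤ z⁺ + z⁻ := add_le_add hpos_le hneg_le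
    _ = |z| := posPart_add_negPart z

variable {E F : Type*}
  [Lattice E] [AddCommGroup E] [Module ℝ E]
  [CovariantClass E E (· + ·) (· ≤ ·)] [PosSMulMono ℝ E]
  [Lattice F] [AddCommGroup F] [Module ℝ F]
  [CovariantClass F F (· + ·) (· ≤ ·)] [PosSMulMono ℝ F]

theorem atomic_band_general
    {Λ : Type*} [Preorder Λ] [IsDirected Λ (· ≤ ·)]
    (Φ : (E →ₗ[ℝ] E) → (F →ₗ[ℝ] F)) (hΦ : IsBooleanHom Φ)
    (Tl : Λ → E → F) (hTl : ∀ l, IsAtomic Φ (Tl l)) (T : E → F)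
    (hconv : ∀ x : E, ∃ u : Λ → F, Antitone u ∧ IsGLB (Set.range u) 0 ∧
      ∃ l₀ : Λ, ∀ l : Λ, l₀ ≤ l → |Tl l x - T x| ≤ u l) :
    IsAtomic Φ T := by
  intro π hπ x
  obtain ⟨u, hu, hu0, l₁, hul⟩ := hconv (π x)
  obtain ⟨v, hv, hv0, l₂, hvl⟩ := hconv x
  obtain ⟨l₀, hl₁, hl₂⟩ := directed_of (· ≤ ·) l₁ l₂
  have hbound : ∀ l, l₀ ≤ l → |T (π x) - Φ π (T x)| ≤ u l + v l := fun l hl =>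
    calc |T (π x) - Φ π (T x)| ≤ |T (π x) - Tl l (π x)| + |Tl l (π x) - Φ π (T x)| := by
          simpa only [sub_add_sub_cancel] using
            abs_add_le (T (π x) - Tl l (π x)) (Tl l (π x) - Φ π (T x))
      _ = |Tl l (π x) - T (π x)| + |Φ π (Tl l x - T x)| := by
          rw [abs_sub_comm (T (π x)), hTl l π hπ x, map_sub]
      _ ≤ u l + v l := add_le_add (hul l (hl₁.trans hl))
          (((hΦ.1 π hπ).abs_apply_le_s7 _).trans (hvl l (hl₂.trans hl)))
  have habs := abs_le'.1 ((hu.add hv).le_of_eventually_le (hu.isGLB_range_add hu0 hv hv0) hbound)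
  exact sub_eq_zero.1 (le_antisymm habs.1 (neg_nonpos.1 habs.2))

/-- an order limit of a net of atomic operators (all subordinate to the same
Boolean homomorphism `Φ`) is atomic subordinate to `Φ`. -/
theorem atomic_band
    {Λ : Type*} [Nonempty Λ] [Preorder Λ] [IsDirected Λ (· ≤ ·)]
    (Φ : (E →ₗ[ℝ] E) → (F →ₗ[ℝ] F)) (hΦ : IsBooleanHom Φ)
    (Tl : Λ → E → F) (hTl : ∀ l, IsAtomic Φ (Tl l)) (T : E → F)
    (hconv : ∀ x : E, ∃ u : Λ → F, Antitone u ∧ IsGLB (Set.range u) 0 ∧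
      ∃ l₀ : Λ, ∀ l : Λ, l₀ ≤ l → |Tl l x - T x| ≤ u l) :
    IsAtomic Φ T :=
  atomic_band_general Φ hΦ Tl hTl T hconv

end VL
end

section
/- Let E be a vector lattice with the principal projection property, F a Dedekind complete vector lattice, Φ : 𝔅(E) → 𝔅(F) a Boolean homomorphism, T : E → F a positive orthogonally additive operator, and set R(T)(x) := inf { Σᵢ Φ(πᵢ)(T(πᵢ x)) : (πᵢ) ∈ 𝔇₀ }. Then R(T) = T if and only if T is atomic subordinate to Φ. -/
/-!
If `R(T) = T`, then `T x` is below the sum for the partition `(π, Id - π)`, namely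
`Φ(π)(T(π x)) + (Id - Φ(π))(T(x - π x))`, while orthogonal additivity gives
`T x = T(π x) + T(x - π x)`. Applying `Φ(π)` shows that `Φ(π)` kills `T(x - π x)`, and then
`Φ(π)` fixes `T(π x)`; so `T(π x) = Φ(π)(T x)`. Conversely, if `T` is atomic, every sum
`Σ Φ(πᵢ)(T(πᵢ x))` equals `Σ Φ(πᵢ)(T x) = Φ(Σ πᵢ)(T x) = T x`, so the set is `{T x}`.
-/

namespace VL

variable {E F : Type*}
  [Lattice E] [AddCommGroup E] [Module ℝ E]
  [CovariantClass E E (· + ·) (· ≤ ·)] [PosSMulMono ℝ E]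
  [Lattice F] [AddCommGroup F] [Module ℝ F]
  [CovariantClass F F (· + ·) (· ≤ ·)] [PosSMulMono ℝ F]

/-- A finite partition of the identity: finitely many pairwise disjoint order projections
summing to the identity. -/
def IsPartitionOfIdentity {E : Type*} [Lattice E] [AddCommGroup E] [Module ℝ E]
    {n : ℕ} (π : Fin n → E →ₗ[ℝ] E) : Prop :=
  (∀ i, IsOrderProjection (π i)) ∧
  (∀ i j, i ≠ j → (π i) ∘ₗ (π j) = 0) ∧
  (∑ i, π i) = LinearMap.id

/-- The set `{ Σᵢ Φ(πᵢ)(T(πᵢ x)) : (πᵢ) ∈ 𝔇₀ }` of values at `x` of the operators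
associated to finite partitions of the identity. -/
def atomicSumSet (Φ : (E →ₗ[ℝ] E) → (F →ₗ[ℝ] F)) (T : E → F) (x : E) : Set F :=
  {w : F | ∃ (n : ℕ) (π : Fin n → E →ₗ[ℝ] E), IsPartitionOfIdentity π ∧
    w = ∑ i, Φ (π i) (T (π i x))}

section OrderProjection

variable {G : Type*} [Lattice G] [AddCommGroup G] [Module ℝ G]

lemma isOrderProjection_id : IsOrderProjection (LinearMap.id : G →ₗ[ℝ] G) :=
  ⟨fun _ => rfl, fun _ hx => ⟨hx, le_rfl⟩⟩

lemma isOrderProjection_zero : IsOrderProjection (0 : G →ₗ[ℝ] G) :=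
  ⟨fun _ => rfl, fun _ hx => ⟨le_rfl, hx⟩⟩

variable [AddLeftMono G] {π ρ : G →ₗ[ℝ] G}

lemma IsOrderProjection.mono (hπ : IsOrderProjection π) {a b : G} (hab : a ≤ b) :
    π a ≤ π b := by
  simpa using (hπ.2 (b - a) (sub_nonneg.2 hab)).1

lemma IsOrderProjection.compl_s10 (hπ : IsOrderProjection π) :
    IsOrderProjection (LinearMap.id - π) := by
  refine ⟨fun x => ?_, fun x hx => ?_⟩
  · simp [hπ.1]
  · simpa using (hπ.2 x hx).symm

lemma IsOrderProjection.apply_inf_sub_eq_zero (hπ : IsOrderProjection π) {x : G}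
    (hx : 0 ≤ x) : π x ⊓ (x - π x) = 0 := by
  set w := π x ⊓ (x - π x)
  have hπw : π w ≤ 0 := by simpa [hπ.1] using hπ.mono (inf_le_right : w ≤ x - π x)
  have hπcw : w - π w ≤ 0 := by simpa [hπ.1] using hπ.compl_s10.mono (inf_le_left : w ≤ π x)
  refine le_antisymm ?_ (le_inf (hπ.2 x hx).1 (sub_nonneg.2 (hπ.2 x hx).2))
  simpa using add_le_add hπw hπcw

lemma IsOrderProjection.abs_apply_le_s10 (hπ : IsOrderProjection π) (x : G) : |π x| ≤ π |x| :=
  abs_le'.2 ⟨hπ.mono (le_abs_self x), by simpa using hπ.mono (neg_le_abs x)⟩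

lemma IsOrderProjection.vDisjoint_apply_sub (hπ : IsOrderProjection π) (x : G) :
    VDisjoint (π x) (x - π x) := by
  have hcompl : |x - π x| ≤ |x| - π |x| := by simpa using hπ.compl_s10.abs_apply_le_s10 x
  refine le_antisymm ?_ (le_inf (abs_nonneg _) (abs_nonneg _))
  calc |π x| ⊓ |x - π x| ≤ π |x| ⊓ (|x| - π |x|) := inf_le_inf (hπ.abs_apply_le_s10 x) hcompl
    _ = 0 := hπ.apply_inf_sub_eq_zero (abs_nonneg x)

lemma IsOrderProjection.add (hπ : IsOrderProjection π) (hρ : IsOrderProjection ρ)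
    (hπρ : π ∘ₗ ρ = 0) (hρπ : ρ ∘ₗ π = 0) : IsOrderProjection (π + ρ) := by
  have hπρ' (x : G) : π (ρ x) = 0 := LinearMap.congr_fun hπρ x
  have hρπ' (x : G) : ρ (π x) = 0 := LinearMap.congr_fun hρπ x
  refine ⟨fun x => by simp [hπ.1, hρ.1, hπρ', hρπ'], fun x hx => ⟨?_, ?_⟩⟩
  · exact add_nonneg (hπ.2 x hx).1 (hρ.2 x hx).1
  · have : ρ x ≤ x - π x := by
      simpa [hρπ'] using (hρ.2 (x - π x) (sub_nonneg.2 (hπ.2 x hx).2)).2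
    simpa using add_le_add (le_refl (π x)) this

lemma IsOrderProjection.eq_and_eq_zero_of_add_le (hπ : IsOrderProjection π) {a b : G}
    (ha : 0 ≤ a) (hb : 0 ≤ b) (h : a + b ≤ π a + (b - π b)) : π a = a ∧ π b = 0 := by
  have hπb : π b = 0 := by
    refine le_antisymm ?_ (hπ.2 b hb).1
    simpa [hπ.1] using hπ.mono h
  refine ⟨le_antisymm (hπ.2 a ha).2 ?_, hπb⟩
  simpa [hπb] using h

end OrderProjection

lemma comp_sum_eq_zero_of_notMem {G ι : Type*} [AddCommGroup G] [Module ℝ G]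
    {π : ι → G →ₗ[ℝ] G} (hdisj : ∀ i j, i ≠ j → π i ∘ₗ π j = 0) {a : ι}
    {S : Finset ι} (ha : a ∉ S) :
    π a ∘ₗ ∑ i ∈ S, π i = 0 ∧ (∑ i ∈ S, π i) ∘ₗ π a = 0 := by
  constructor <;> ext x <;> simp only [LinearMap.comp_apply, LinearMap.sum_apply, map_sum,
    LinearMap.zero_apply] <;> refine Finset.sum_eq_zero fun j hj => ?_
  · exact LinearMap.congr_fun (hdisj a j (ne_of_mem_of_not_mem hj ha).symm) x
  · exact LinearMap.congr_fun (hdisj j a (ne_of_mem_of_not_mem hj ha)) x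

section Partition

variable {G : Type*} [Lattice G] [AddCommGroup G] [Module ℝ G] [AddLeftMono G]

lemma isOrderProjection_sum {ι : Type*} {π : ι → G →ₗ[ℝ] G}
    (hπ : ∀ i, IsOrderProjection (π i)) (hdisj : ∀ i j, i ≠ j → π i ∘ₗ π j = 0)
    (S : Finset ι) : IsOrderProjection (∑ i ∈ S, π i) := by
  classical
  induction S using Finset.induction_on with
  | empty => exact isOrderProjection_zero
  | insert a S ha ih =>
    obtain ⟨h₁, h₂⟩ := comp_sum_eq_zero_of_notMem hdisj ha
    rw [Finset.sum_insert ha]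
    exact (hπ a).add ih h₁ h₂

lemma isPartitionOfIdentity_compl_pair {π : G →ₗ[ℝ] G}
    (hπ : IsOrderProjection π) : IsPartitionOfIdentity ![π, LinearMap.id - π] := by
  refine ⟨fun i => ?_, fun i j hij => ?_, by simp⟩
  · fin_cases i
    exacts [hπ, hπ.compl_s10]
  · fin_cases i <;> fin_cases j <;> first | exact absurd rfl hij | (ext x; simp [hπ.1])

end Partition

namespace IsBooleanHom

variable {G H : Type*} [Lattice G] [AddCommGroup G] [Module ℝ G]
  [Lattice H] [AddCommGroup H] [Module ℝ H] {Φ : (G →ₗ[ℝ] G) → (H →ₗ[ℝ] H)}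

lemma map_zero (hΦ : IsBooleanHom Φ) : Φ 0 = 0 := by
  have hid : Φ LinearMap.id = LinearMap.id - Φ 0 := by
    simpa using hΦ.2.2.2 0 isOrderProjection_zero
  have h := hΦ.2.1 0 LinearMap.id isOrderProjection_zero isOrderProjection_id
  rw [LinearMap.zero_comp, hid] at h
  ext y
  simpa [(hΦ.1 0 isOrderProjection_zero).1] using LinearMap.congr_fun h y

lemma map_id (hΦ : IsBooleanHom Φ) : Φ LinearMap.id = LinearMap.id := by
  simpa [hΦ.map_zero] using hΦ.2.2.2 0 isOrderProjection_zero

lemma map_add_of_comp_eq_zero (hΦ : IsBooleanHom Φ) {π ρ : G →ₗ[ℝ] G}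
    (hπ : IsOrderProjection π) (hρ : IsOrderProjection ρ) (hπρ : π ∘ₗ ρ = 0) :
    Φ (π + ρ) = Φ π + Φ ρ := by
  have hjoin := hΦ.2.2.1 π ρ hπ hρ
  rwa [hπρ, sub_zero, ← hΦ.2.1 π ρ hπ hρ, hπρ, hΦ.map_zero, sub_zero] at hjoin

lemma map_sum [AddLeftMono G] (hΦ : IsBooleanHom Φ) {ι : Type*} {π : ι → G →ₗ[ℝ] G}
    (hπ : ∀ i, IsOrderProjection (π i)) (hdisj : ∀ i j, i ≠ j → π i ∘ₗ π j = 0)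
    (S : Finset ι) : Φ (∑ i ∈ S, π i) = ∑ i ∈ S, Φ (π i) := by
  classical
  induction S using Finset.induction_on with
  | empty => simpa using hΦ.map_zero
  | insert a S ha ih =>
    rw [Finset.sum_insert ha, Finset.sum_insert ha, ← ih]
    exact hΦ.map_add_of_comp_eq_zero (hπ a) (isOrderProjection_sum hπ hdisj S)
      (comp_sum_eq_zero_of_notMem hdisj ha).1

lemma sum_map_eq_id [AddLeftMono G] (hΦ : IsBooleanHom Φ) {n : ℕ} {π : Fin n → G →ₗ[ℝ] G}
    (hp : IsPartitionOfIdentity π) : ∑ i, Φ (π i) = LinearMap.id := by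
  rw [← hΦ.map_sum hp.1 hp.2.1, hp.2.2, hΦ.map_id]

end IsBooleanHom

section AtomicSum

variable {G H : Type*} [Lattice G] [AddCommGroup G] [Module ℝ G] [AddLeftMono G]
  [Lattice H] [AddCommGroup H] [Module ℝ H] {Φ : (G →ₗ[ℝ] G) → (H →ₗ[ℝ] H)}

lemma compl_pair_mem_atomicSumSet (hΦ : IsBooleanHom Φ)
    {π : G →ₗ[ℝ] G} (hπ : IsOrderProjection π) (T : G → H) (x : G) :
    Φ π (T (π x)) + (T (x - π x) - Φ π (T (x - π x))) ∈ atomicSumSet Φ T x :=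
  ⟨2, _, isPartitionOfIdentity_compl_pair hπ, by simp [hΦ.2.2.2 π hπ]⟩

lemma atomicSumSet_eq_singleton (hΦ : IsBooleanHom Φ)
    {T : G → H} (hT : IsAtomic Φ T) (x : G) : atomicSumSet Φ T x = {T x} := by
  ext w
  constructor
  · rintro ⟨n, π, hp, rfl⟩
    calc ∑ i, Φ (π i) (T (π i x)) = ∑ i, Φ (π i) (T x) :=
          Finset.sum_congr rfl fun i _ => by rw [hT _ (hp.1 i), (hΦ.1 _ (hp.1 i)).1]
      _ = T x := by rw [← LinearMap.sum_apply, hΦ.sum_map_eq_id hp, LinearMap.id_apply]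
  · rintro rfl
    exact ⟨1, fun _ => LinearMap.id, ⟨fun _ => isOrderProjection_id,
      fun i j hij => absurd (Subsingleton.elim i j) hij, by simp⟩, by simp [hΦ.map_id]⟩

end AtomicSum

theorem atomic_projection_fixed_points_general
    (Φ : (E →ₗ[ℝ] E) → (F →ₗ[ℝ] F)) (hΦ : IsBooleanHom Φ)
    (T : E → F) (hTpos : ∀ x : E, 0 ≤ T x)
    (hToa : ∀ x y : E, VDisjoint x y → T (x + y) = T x + T y)
    (R : E → F) (hR : ∀ x : E, IsGLB (atomicSumSet Φ T x) (R x)) :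
    (∀ x : E, R x = T x) ↔ IsAtomic Φ T := by
  refine ⟨fun hRT π hπ x => ?_, fun hT x =>
    (hR x).unique (atomicSumSet_eq_singleton hΦ hT x ▸ isGLB_singleton)⟩
  have hsplit : T x = T (π x) + T (x - π x) := by
    simpa using hToa _ _ (hπ.vDisjoint_apply_sub x)
  have hle : T (π x) + T (x - π x) ≤ Φ π (T (π x)) + (T (x - π x) - Φ π (T (x - π x))) := by
    rw [← hsplit, ← hRT x]
    exact (hR x).1 (compl_pair_mem_atomicSumSet hΦ hπ T x)
  obtain ⟨hfix, hkill⟩ := (hΦ.1 π hπ).eq_and_eq_zero_of_add_le (hTpos _) (hTpos _) hle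
  rw [hsplit, map_add, hfix, hkill, add_zero]

/-- `R(T) = T` if and only if `T` is atomic subordinate to `Φ`. -/
theorem atomic_projection_fixed_points
    (hE : HasPPP E) (hF : DedekindComplete F)
    (Φ : (E →ₗ[ℝ] E) → (F →ₗ[ℝ] F)) (hΦ : IsBooleanHom Φ)
    (T : E → F) (hTpos : ∀ x : E, 0 ≤ T x)
    (hToa : ∀ x y : E, VDisjoint x y → T (x + y) = T x + T y)
    (R : E → F) (hR : ∀ x : E, IsGLB (atomicSumSet Φ T x) (R x)) :
    (∀ x : E, R x = T x) ↔ IsAtomic Φ T :=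
  atomic_projection_fixed_points_general Φ hΦ T hTpos hToa R hR

end VL
end
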